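/- arXiv:2406.00376 — 5 statements merged into one kernel-verified Lean document; each statement's English description precedes it below -/
import Mathlib

section
/- Let X_1,...,X_n be random variables such that each X_i takes values in {0, s_i} with 0 ≤ s_i ≤ 1, and the conditional probability Pr[X_i = s_i | X_1,...,X_{i-1}] ≤ p. Let X = Σ X_i and μ = p·Σ s_i. Then for any Δ > 0, Pr[X > (1+Δ)μ] ≤ exp(-(Δ-(e-2))·μ). -/
/-!
Writing `S k = ∑ i < k, X i`, the exponential moment `E[exp (S k)]` grows by a factor of at most
`1 + p (e^{s k} - 1) ≤ exp ((e - 1) p s k)` per step: `exp (X k) = 1 + (e^{s k} - 1) 1{X k = s k}`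
and, since `exp (S k)` is measurable with respect to `σ(X 0, …, X (k-1))`, the conditional
hypothesis gives `E[exp (S k); X k = s k] ≤ p E[exp (S k)]`. Markov's inequality for `exp (S n)`
at level `exp ((1 + Δ) μ₀)`, `μ₀ = p ∑ s i`, then yields the bound.
-/

open MeasureTheory Real Finset
open scoped ENNReal

section

variable {Ω β : Type*}

theorem setLIntegral_le_mul_lintegral_of_measurable {m m₀ : MeasurableSpace Ω}
    (hm : m ≤ m₀) {μ : Measure Ω} {A : Set Ω} {q : ℝ≥0∞}
    (hA : ∀ B, MeasurableSet[m] B → μ (A ∩ B) ≤ q * μ B)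
    {g : Ω → ℝ≥0∞} (hg : Measurable[m] g) :
    ∫⁻ ω in A, g ω ∂μ ≤ q * ∫⁻ ω, g ω ∂μ := by
  have hle : (μ.restrict A).trim hm ≤ q • μ.trim hm := by
    refine Measure.le_iff.2 fun B hB => ?_
    rw [trim_measurableSet_eq hm hB, Measure.smul_apply, trim_measurableSet_eq hm hB,
      Measure.restrict_apply (hm B hB), Set.inter_comm, smul_eq_mul]
    exact hA B hB
  calc ∫⁻ ω in A, g ω ∂μ = ∫⁻ ω, g ω ∂(μ.restrict A).trim hm :=
        (lintegral_trim hm hg).symm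
    _ ≤ ∫⁻ ω, g ω ∂(q • μ.trim hm) := lintegral_mono' hle le_rfl
    _ = q * ∫⁻ ω, g ω ∂μ := by
        rw [lintegral_smul_measure, lintegral_trim hm hg, smul_eq_mul]

theorem lintegral_mul_one_add_indicator_le {m m₀ : MeasurableSpace Ω}
    (hm : m ≤ m₀) {μ : Measure Ω} {A : Set Ω} (hAm : MeasurableSet A) {q : ℝ≥0∞}
    (hA : ∀ B, MeasurableSet[m] B → μ (A ∩ B) ≤ q * μ B)
    {g : Ω → ℝ≥0∞} (hg : Measurable[m] g) (c : ℝ≥0∞) :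
    ∫⁻ ω, g ω * (1 + c * A.indicator 1 ω) ∂μ ≤ (1 + q * c) * ∫⁻ ω, g ω ∂μ := by
  have hsplit : ∀ ω, g ω * (1 + c * A.indicator 1 ω) = g ω + c * A.indicator g ω := by
    intro ω
    by_cases hω : ω ∈ A <;> simp [hω, mul_add, mul_comm]
  calc ∫⁻ ω, g ω * (1 + c * A.indicator 1 ω) ∂μ
      = ∫⁻ ω, g ω ∂μ + c * ∫⁻ ω in A, g ω ∂μ := by
        simp_rw [hsplit]
        have hg₀ : Measurable g := hg.mono hm le_rfl
        rw [lintegral_add_left hg₀, lintegral_const_mul c (hg₀.indicator hAm),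
          lintegral_indicator hAm]
    _ ≤ ∫⁻ ω, g ω ∂μ + c * (q * ∫⁻ ω, g ω ∂μ) := by
        gcongr; exact setLIntegral_le_mul_lintegral_of_measurable hm hA hg
    _ = (1 + q * c) * ∫⁻ ω, g ω ∂μ := by ring

theorem exp_sub_one_le_mul {s : ℝ} (hs0 : 0 ≤ s) (hs1 : s ≤ 1) :
    exp s - 1 ≤ (exp 1 - 1) * s := by
  have hconv := convexOn_exp.2 (Set.mem_univ 0) (Set.mem_univ 1) (sub_nonneg.2 hs1) hs0 (by ring)
  simp only [smul_eq_mul, mul_zero, mul_one, zero_add, exp_zero] at hconv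
  linarith

theorem one_add_mul_exp_sub_one_le_exp {p s : ℝ} (hp : 0 ≤ p) (hs0 : 0 ≤ s) (hs1 : s ≤ 1) :
    1 + p * (exp s - 1) ≤ exp ((exp 1 - 1) * (p * s)) :=
  calc 1 + p * (exp s - 1) ≤ exp (p * (exp s - 1)) := by
        linarith [add_one_le_exp (p * (exp s - 1))]
    _ ≤ exp ((exp 1 - 1) * (p * s)) := by
        rw [exp_le_exp]
        linarith [mul_le_mul_of_nonneg_left (exp_sub_one_le_mul hs0 hs1) hp]

theorem ofReal_exp_eq_one_add_indicator {Y : Ω → ℝ} {s : ℝ} (hs : 0 ≤ s) {ω : Ω}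
    (hY : Y ω = 0 ∨ Y ω = s) :
    ENNReal.ofReal (exp (Y ω)) =
      1 + ENNReal.ofReal (exp s - 1) * {ω | Y ω = s}.indicator 1 ω := by
  by_cases hω : Y ω = s
  · rw [Set.indicator_of_mem (show ω ∈ {ω | Y ω = s} from hω), Pi.one_apply, mul_one, hω,
      ← ENNReal.ofReal_one, ← ENNReal.ofReal_add zero_le_one (sub_nonneg.2 (one_le_exp hs)),
      add_sub_cancel]
  · rw [Set.indicator_of_notMem (show ω ∉ {ω | Y ω = s} from hω), hY.resolve_right hω]
    simp

abbrev prefixMeasurableSpace [MeasurableSpace β] (X : ℕ → Ω → β) (m : ℕ) :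
    MeasurableSpace Ω :=
  MeasurableSpace.comap (fun ω (j : Fin m) => X j ω) MeasurableSpace.pi

theorem measurable_prefixMeasurableSpace [MeasurableSpace β] (X : ℕ → Ω → β)
    {i m : ℕ} (hi : i < m) : Measurable[prefixMeasurableSpace X m] (X i) :=
  (measurable_pi_apply (⟨i, hi⟩ : Fin m)).comp
    (comap_measurable (m := MeasurableSpace.pi) fun ω (j : Fin m) => X j ω)

theorem prefixMeasurableSpace_le [MeasurableSpace Ω] [MeasurableSpace β]
    {X : ℕ → Ω → β} (hX : ∀ i, Measurable (X i)) (m : ℕ) :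
    prefixMeasurableSpace X m ≤ ‹MeasurableSpace Ω› :=
  (measurable_pi_lambda (fun ω (j : Fin m) => X j ω) fun j => hX j).comap_le

theorem lintegral_exp_sum_le [MeasurableSpace Ω] {μ : Measure Ω}
    [IsProbabilityMeasure μ] {X : ℕ → Ω → ℝ} (hXm : ∀ i, Measurable (X i)) {s : ℕ → ℝ}
    (hs0 : ∀ i, 0 ≤ s i) (hs1 : ∀ i, s i ≤ 1) (hval : ∀ i ω, X i ω = 0 ∨ X i ω = s i)
    {p : ℝ} (hp0 : 0 ≤ p) (k : ℕ)
    (hcond : ∀ i < k, ∀ A : Set Ω, MeasurableSet[prefixMeasurableSpace X i] A →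
      μ ({ω | X i ω = s i} ∩ A) ≤ ENNReal.ofReal p * μ A) :
    ∫⁻ ω, ENNReal.ofReal (exp (∑ i ∈ range k, X i ω)) ∂μ ≤
      ENNReal.ofReal (exp ((exp 1 - 1) * (p * ∑ i ∈ range k, s i))) := by
  induction k with
  | zero => simp
  | succ k ih =>
    have hc : 0 ≤ exp (s k) - 1 := sub_nonneg.2 (one_le_exp (hs0 k))
    have hprefix : Measurable[prefixMeasurableSpace X k]
        fun ω => ENNReal.ofReal (exp (∑ i ∈ range k, X i ω)) :=
      (Finset.measurable_sum _ fun i hi =>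
        measurable_prefixMeasurableSpace X (mem_range.1 hi)).exp.ennreal_ofReal
    calc ∫⁻ ω, ENNReal.ofReal (exp (∑ i ∈ range (k + 1), X i ω)) ∂μ
        = ∫⁻ ω, ENNReal.ofReal (exp (∑ i ∈ range k, X i ω)) *
            (1 + ENNReal.ofReal (exp (s k) - 1) * {ω | X k ω = s k}.indicator 1 ω) ∂μ := by
          simp_rw [sum_range_succ, exp_add, ENNReal.ofReal_mul (exp_pos _).le,
            ofReal_exp_eq_one_add_indicator (hs0 k) (hval k _)]
      _ ≤ (1 + ENNReal.ofReal p * ENNReal.ofReal (exp (s k) - 1)) *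
            ∫⁻ ω, ENNReal.ofReal (exp (∑ i ∈ range k, X i ω)) ∂μ :=
          lintegral_mul_one_add_indicator_le (prefixMeasurableSpace_le hXm k)
            (hXm k (measurableSet_singleton _)) (hcond k (lt_add_one k)) hprefix _
      _ ≤ ENNReal.ofReal (exp ((exp 1 - 1) * (p * s k))) *
            ENNReal.ofReal (exp ((exp 1 - 1) * (p * ∑ i ∈ range k, s i))) := by
          rw [← ENNReal.ofReal_mul hp0, ← ENNReal.ofReal_one,
            ← ENNReal.ofReal_add zero_le_one (mul_nonneg hp0 hc)]
          gcongr
          · exact one_add_mul_exp_sub_one_le_exp hp0 (hs0 k) (hs1 k)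
          · exact ih fun i hi => hcond i (hi.trans (lt_add_one k))
      _ = ENNReal.ofReal (exp ((exp 1 - 1) * (p * ∑ i ∈ range (k + 1), s i))) := by
          rw [← ENNReal.ofReal_mul (exp_pos _).le, ← exp_add, sum_range_succ]
          ring_nf

theorem measure_lt_le_lintegral_exp_div [MeasurableSpace Ω] {μ : Measure Ω}
    {f : Ω → ℝ} (hf : AEMeasurable f μ) (t : ℝ) :
    μ {ω | t < f ω} ≤ (∫⁻ ω, ENNReal.ofReal (exp (f ω)) ∂μ) / ENNReal.ofReal (exp t) := by
  refine (measure_mono fun ω (hω : t < f ω) => ?_).trans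
    (meas_ge_le_lintegral_div hf.exp.ennreal_ofReal (by simp [exp_pos]) ENNReal.ofReal_ne_top)
  exact ENNReal.ofReal_le_ofReal (exp_le_exp.2 hω.le)

end

theorem conditional_chernoff_bound_general {Ω : Type*} [MeasurableSpace Ω]
    (μ : Measure Ω) [IsProbabilityMeasure μ]
    (n : ℕ) (X : ℕ → Ω → ℝ) (hXm : ∀ i, Measurable (X i))
    (s : ℕ → ℝ) (hs0 : ∀ i, 0 ≤ s i) (hs1 : ∀ i, s i ≤ 1)
    (hval : ∀ i, ∀ ω, X i ω = 0 ∨ X i ω = s i)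
    (p : ℝ) (hp0 : 0 ≤ p)
    (hcond : ∀ i < n, ∀ A : Set Ω,
      MeasurableSet[MeasurableSpace.comap (fun ω (j : Fin i) => X j ω)
        (MeasurableSpace.pi)] A →
      μ ({ω | X i ω = s i} ∩ A) ≤ ENNReal.ofReal p * μ A)
    (Δ : ℝ) :
    (μ {ω | (1 + Δ) * (p * ∑ i ∈ Finset.range n, s i) <
        ∑ i ∈ Finset.range n, X i ω}).toReal ≤
      exp (-(Δ - (exp 1 - 2)) * (p * ∑ i ∈ Finset.range n, s i)) := by
  set μ₀ := p * ∑ i ∈ range n, s i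
  have hsum : Measurable fun ω => ∑ i ∈ range n, X i ω :=
    Finset.measurable_sum _ fun i _ => hXm i
  refine ENNReal.toReal_le_of_le_ofReal (exp_nonneg _) ?_
  calc μ {ω | (1 + Δ) * μ₀ < ∑ i ∈ range n, X i ω}
      ≤ (∫⁻ ω, ENNReal.ofReal (exp (∑ i ∈ range n, X i ω)) ∂μ) /
          ENNReal.ofReal (exp ((1 + Δ) * μ₀)) :=
        measure_lt_le_lintegral_exp_div hsum.aemeasurable _
    _ ≤ ENNReal.ofReal (exp ((exp 1 - 1) * μ₀)) / ENNReal.ofReal (exp ((1 + Δ) * μ₀)) := by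
        gcongr
        exact lintegral_exp_sum_le hXm hs0 hs1 hval hp0 n hcond
    _ = ENNReal.ofReal (exp (-(Δ - (exp 1 - 2)) * μ₀)) := by
        rw [← ENNReal.ofReal_div_of_pos (exp_pos _), ← exp_sub]
        ring_nf

/-- Concentration bound for a sum of random variables `X i ∈ {0, s i}` with
`0 ≤ s i ≤ 1` and conditional probability `Pr[X i = s i | X 0, …, X (i-1)] ≤ p`:
for `μ₀ = p · Σ s i` and any `Δ > 0`,
`Pr[Σ X i > (1+Δ)·μ₀] ≤ exp (-(Δ - (e-2))·μ₀)`. -/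
theorem conditional_chernoff_bound {Ω : Type*} [MeasurableSpace Ω]
    (μ : Measure Ω) [IsProbabilityMeasure μ]
    (n : ℕ) (X : ℕ → Ω → ℝ) (hXm : ∀ i, Measurable (X i))
    (s : ℕ → ℝ) (hs0 : ∀ i, 0 ≤ s i) (hs1 : ∀ i, s i ≤ 1)
    (hval : ∀ i, ∀ ω, X i ω = 0 ∨ X i ω = s i)
    (p : ℝ) (hp0 : 0 ≤ p)
    (hcond : ∀ i < n, ∀ A : Set Ω,
      MeasurableSet[MeasurableSpace.comap (fun ω (j : Fin i) => X j ω)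
        (MeasurableSpace.pi)] A →
      μ ({ω | X i ω = s i} ∩ A) ≤ ENNReal.ofReal p * μ A)
    (Δ : ℝ) (hΔ : 0 < Δ) :
    (μ {ω | (1 + Δ) * (p * ∑ i ∈ Finset.range n, s i) <
        ∑ i ∈ Finset.range n, X i ω}).toReal ≤
      exp (-(Δ - (exp 1 - 2)) * (p * ∑ i ∈ Finset.range n, s i)) :=
  conditional_chernoff_bound_general μ n X hXm s hs0 hs1 hval p hp0 hcond Δ
end

section
/- Let X_1,...,X_n be random variables with X_i ∈ {0, s_i}, 0 ≤ s_i ≤ 1, and Pr[X_i = s_i | X_1,...,X_{i-1}] ≤ p. Then E[e^{X_1+...+X_n}] ≤ Π_{i=1}^n (1 + p(e^{s_i} - 1)). -/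
open MeasureTheory Real Finset

/-!
Write `A i = {X i = s i}`. Since `X i ∈ {0, s i}`, `exp (X i) = 1 + (exp (s i) - 1) 𝟙_{A i}`, and
expanding the product gives `exp (∑ X i) = ∑_{t ⊆ range n} (∏_{i ∈ t} (exp (s i) - 1)) 𝟙_{⋂_{i ∈ t} A i}`,
a sum with nonnegative coefficients. Peeling off the largest index of `t` and applying the
conditional hypothesis to the intersection of the remaining `A i`, which is determined by the
earlier variables, gives `μ (⋂_{i ∈ t} A i) ≤ p ^ #t`; summing back up yields
`∏ (1 + p (exp (s i) - 1))`.
-/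

section

variable {Ω ι : Type*} [MeasurableSpace Ω]

theorem measure_biInter_le_pow [LinearOrder ι] (μ : Measure Ω) [IsZeroOrProbabilityMeasure μ]
    (A : ι → Set Ω) (F : ι → MeasurableSpace Ω) (hAF : ∀ i j, j < i → MeasurableSet[F i] (A j))
    (q : ENNReal) (t : Finset ι)
    (hA : ∀ i ∈ t, ∀ B, MeasurableSet[F i] B → μ (A i ∩ B) ≤ q * μ B) :
    μ (⋂ i ∈ t, A i) ≤ q ^ #t := by
  induction t using Finset.induction_on_max with
  | empty => simpa using prob_le_one
  | insert a t ha ih =>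
    have hB : MeasurableSet[F a] (⋂ i ∈ t, A i) :=
      Finset.measurableSet_biInter t fun i hi => hAF a i (ha i hi)
    calc μ (⋂ i ∈ insert a t, A i) = μ (A a ∩ ⋂ i ∈ t, A i) := by
          rw [Finset.set_biInter_insert]
      _ ≤ q * μ (⋂ i ∈ t, A i) := hA a (mem_insert_self a t) _ hB
      _ ≤ q * q ^ #t := by
          gcongr
          exact ih fun i hi => hA i (mem_insert_of_mem hi)
      _ = q ^ #(insert a t) := by
          rw [card_insert_of_notMem fun h => lt_irrefl a (ha a h), pow_succ']

theorem integral_prod_one_add_indicator_le (μ : Measure Ω) [IsFiniteMeasure μ]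
    (A : ι → Set Ω) (hA : ∀ i, MeasurableSet (A i)) (c : ι → ℝ) (hc : ∀ i, 0 ≤ c i)
    (p : ℝ) (r : Finset ι) (hμ : ∀ t ∈ r.powerset, μ.real (⋂ i ∈ t, A i) ≤ p ^ #t) :
    ∫ ω, ∏ i ∈ r, (1 + (A i).indicator (fun _ => c i) ω) ∂μ ≤ ∏ i ∈ r, (1 + p * c i) := by
  have hB : ∀ t : Finset ι, MeasurableSet (⋂ i ∈ t, A i) := fun t =>
    Finset.measurableSet_biInter t fun i _ => hA i
  have hexpand : ∀ ω, ∏ i ∈ r, (1 + (A i).indicator (fun _ => c i) ω) =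
      ∑ t ∈ r.powerset, (⋂ i ∈ t, A i).indicator (fun _ => ∏ i ∈ t, c i) ω := fun ω => by
    simp only [prod_one_add, prod_indicator_apply, Finset.prod_fn]
  calc ∫ ω, ∏ i ∈ r, (1 + (A i).indicator (fun _ => c i) ω) ∂μ
      = ∑ t ∈ r.powerset, μ.real (⋂ i ∈ t, A i) * ∏ i ∈ t, c i := by
        simp_rw [hexpand]
        rw [integral_finsetSum _ fun t _ => (integrable_const _).indicator (hB t)]
        simp only [integral_indicator_const _ (hB _), smul_eq_mul]
    _ ≤ ∑ t ∈ r.powerset, p ^ #t * ∏ i ∈ t, c i :=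
        sum_le_sum fun t ht => by gcongr; exacts [prod_nonneg fun i _ => hc i, hμ t ht]
    _ = ∏ i ∈ r, (1 + p * c i) := by
        simp only [prod_one_add, prod_mul_distrib, prod_const]

end

theorem conditional_mgf_bound_general {Ω : Type*} [MeasurableSpace Ω]
    (μ : Measure Ω) [IsProbabilityMeasure μ]
    (n : ℕ) (X : ℕ → Ω → ℝ) (hXm : ∀ i, Measurable (X i))
    (s : ℕ → ℝ) (hs0 : ∀ i, 0 ≤ s i)
    (hval : ∀ i, ∀ ω, X i ω = 0 ∨ X i ω = s i)
    (p : ℝ) (hp0 : 0 ≤ p)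
    (hcond : ∀ i < n, ∀ A : Set Ω,
      MeasurableSet[MeasurableSpace.comap (fun ω (j : Fin i) => X j ω)
        (MeasurableSpace.pi)] A →
      μ ({ω | X i ω = s i} ∩ A) ≤ ENNReal.ofReal p * μ A) :
    ∫ ω, exp (∑ i ∈ Finset.range n, X i ω) ∂μ ≤
      ∏ i ∈ Finset.range n, (1 + p * (exp (s i) - 1)) := by
  set A : ℕ → Set Ω := fun i => {ω | X i ω = s i}
  have hexp : ∀ i ω, exp (X i ω) = 1 + (A i).indicator (fun _ => exp (s i) - 1) ω := by
    intro i ω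
    by_cases h : ω ∈ A i
    · rw [Set.indicator_of_mem h, show X i ω = s i from h]
      ring
    · rw [Set.indicator_of_notMem h, (hval i ω).resolve_right h, exp_zero, add_zero]
  have hpast : ∀ i j, j < i → MeasurableSet[MeasurableSpace.comap (fun ω (k : Fin i) => X k ω)
      MeasurableSpace.pi] (A j) := fun i j hji =>
    ((measurable_pi_apply (⟨j, hji⟩ : Fin i)).comp (comap_measurable _)) (measurableSet_singleton _)
  simp_rw [exp_sum, hexp]
  refine integral_prod_one_add_indicator_le μ A (fun i => hXm i (measurableSet_singleton _)) _
    (fun i => sub_nonneg.2 (one_le_exp (hs0 i))) p _ fun t ht => ?_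
  refine ENNReal.toReal_le_of_le_ofReal (pow_nonneg hp0 _) ?_
  rw [ENNReal.ofReal_pow hp0]
  exact measure_biInter_le_pow μ A _ hpast _ t fun i hi =>
    hcond i (mem_range.1 (mem_powerset.1 ht hi))

/-- Moment-generating-function bound: if `X i ∈ {0, s i}` with `0 ≤ s i ≤ 1`
and `Pr[X i = s i | X 0, …, X (i-1)] ≤ p`, then
`E[exp (X 0 + ⋯ + X (n-1))] ≤ Π i, (1 + p·(exp (s i) - 1))`. -/
theorem conditional_mgf_bound {Ω : Type*} [MeasurableSpace Ω]
    (μ : Measure Ω) [IsProbabilityMeasure μ]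
    (n : ℕ) (X : ℕ → Ω → ℝ) (hXm : ∀ i, Measurable (X i))
    (s : ℕ → ℝ) (hs0 : ∀ i, 0 ≤ s i) (hs1 : ∀ i, s i ≤ 1)
    (hval : ∀ i, ∀ ω, X i ω = 0 ∨ X i ω = s i)
    (p : ℝ) (hp0 : 0 ≤ p)
    (hcond : ∀ i < n, ∀ A : Set Ω,
      MeasurableSet[MeasurableSpace.comap (fun ω (j : Fin i) => X j ω)
        (MeasurableSpace.pi)] A →
      μ ({ω | X i ω = s i} ∩ A) ≤ ENNReal.ofReal p * μ A) :
    ∫ ω, exp (∑ i ∈ Finset.range n, X i ω) ∂μ ≤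
      ∏ i ∈ Finset.range n, (1 + p * (exp (s i) - 1)) :=
  conditional_mgf_bound_general μ n X hXm s hs0 hval p hp0 hcond
end

section
/- Consider a bucket with fields (ID, YES, NO), initially (null, 0, 0). On inserting a key-value pair ⟨e, v⟩ with v ≥ 0: if e = ID then YES increases by v; otherwise NO increases by v, and if afterwards NO ≥ YES, then ID is set to e and YES and NO are swapped. Then at all times, for the key e₀ currently stored as ID, the true inserted total f(e₀) satisfies YES - NO ≤ f(e₀) ≤ YES. -/
/-- State of an error-sensible bucket: candidate key (if any), YES counter, NO counter. -/
structure Bucket (K : Type) where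
  id : Option K
  yes : ℝ
  no : ℝ

/-- Weighted majority-vote insertion of one key-value pair. -/
noncomputable def Bucket.insert {K : Type} [DecidableEq K] (b : Bucket K) (p : K × ℝ) : Bucket K :=
  if some p.1 = b.id then
    { b with yes := b.yes + p.2 }
  else
    let no' := b.no + p.2
    if b.yes ≤ no' then ⟨some p.1, no', b.yes⟩ else { b with no := no' }

/-- The empty bucket. -/
def Bucket.init (K : Type) : Bucket K := ⟨none, 0, 0⟩

/-- Final bucket state after inserting a stream of key-value pairs. -/
noncomputable def Bucket.run {K : Type} [DecidableEq K] (L : List (K × ℝ)) : Bucket K :=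
  L.foldl Bucket.insert (Bucket.init K)

/-- The true total value inserted with key `e₀` in the stream `L`. -/
def streamCount {K : Type} [DecidableEq K] (L : List (K × ℝ)) (e₀ : K) : ℝ :=
  (L.map (fun p => if p.1 = e₀ then p.2 else 0)).sum

/-!
The bucket maintains an invariant relating its state to the true counts `f`: `NO ≤ YES`, the
candidate's count lies in `[YES - NO, YES]`, and every other key's count is at most `NO`.
An insertion for the candidate shifts both its count and `YES` by `v`. An insertion for another
key raises that key's count and `NO` by `v`; if this makes `NO ≥ YES`, the swap is sound: the new
candidate's count was at most the old `NO`, i.e. the new `YES` minus `v`, the new `YES - NO` is at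
most `v`, and the dethroned candidate and all other keys have count at most the old `YES`, which
is the new `NO`.
-/

theorem streamCount_nonneg {K : Type} [DecidableEq K] {L : List (K × ℝ)}
    (hv : ∀ p ∈ L, 0 ≤ p.2) (e : K) : 0 ≤ streamCount L e := by
  refine List.sum_nonneg fun x hx => ?_
  obtain ⟨p, hp, rfl⟩ := List.mem_map.1 hx
  split_ifs
  exacts [hv p hp, le_rfl]

theorem streamCount_append_singleton {K : Type} [DecidableEq K] (L : List (K × ℝ)) (p : K × ℝ) :
    streamCount (L ++ [p]) = Function.update (streamCount L) p.1 (streamCount L p.1 + p.2) := by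
  ext e
  rcases eq_or_ne e p.1 with rfl | hne
  · simp [streamCount]
  · simp [streamCount, Function.update_of_ne hne, Ne.symm hne]

namespace Bucket

variable {K : Type}

structure Bounds (f : K → ℝ) (b : Bucket K) : Prop where
  no_le_yes : b.no ≤ b.yes
  candidate : ∀ e, b.id = some e → b.yes - b.no ≤ f e ∧ f e ≤ b.yes
  other : ∀ e, b.id ≠ some e → f e ≤ b.no

theorem bounds_init : (init K).Bounds 0 where
  no_le_yes := le_rfl
  candidate _ h := by simp [init] at h
  other _ _ := le_rfl

variable [DecidableEq K] {f : K → ℝ} {b : Bucket K} {p : K × ℝ}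

theorem insert_of_eq (h : some p.1 = b.id) : b.insert p = { b with yes := b.yes + p.2 } := by
  simp [Bucket.insert, h]

theorem insert_of_ne_of_le (h : some p.1 ≠ b.id) (hle : b.yes ≤ b.no + p.2) :
    b.insert p = ⟨some p.1, b.no + p.2, b.yes⟩ := by
  simp [Bucket.insert, h, hle]

theorem insert_of_ne_of_lt (h : some p.1 ≠ b.id) (hlt : b.no + p.2 < b.yes) :
    b.insert p = { b with no := b.no + p.2 } := by
  simp [Bucket.insert, h, not_le.2 hlt]

theorem run_append_singleton (L : List (K × ℝ)) (p : K × ℝ) :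
    run (L ++ [p]) = (run L).insert p := by
  simp [run]

namespace Bounds

theorem insert_of_eq (hb : b.Bounds f) (hv : 0 ≤ p.2) (h : some p.1 = b.id) :
    (b.insert p).Bounds (Function.update f p.1 (f p.1 + p.2)) := by
  rw [Bucket.insert_of_eq h]
  refine ⟨by dsimp only; linarith [hb.no_le_yes], fun e he => ?_, fun e he => ?_⟩
  · obtain rfl : p.1 = e := Option.some_injective _ (h.trans he)
    have := hb.candidate p.1 he
    simp only [Function.update_self]
    constructor <;> linarith
  · have hne : e ≠ p.1 := by rintro rfl; exact he h.symm
    simpa [Function.update_of_ne hne] using hb.other e he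

theorem insert_of_ne_of_le (hb : b.Bounds f) (hf : 0 ≤ f p.1)
    (h : some p.1 ≠ b.id) (hle : b.yes ≤ b.no + p.2) :
    (b.insert p).Bounds (Function.update f p.1 (f p.1 + p.2)) := by
  rw [Bucket.insert_of_ne_of_le h hle]
  refine ⟨hle, fun e he => ?_, fun e he => ?_⟩
  · obtain rfl : p.1 = e := Option.some_injective _ he
    have := hb.other p.1 (Ne.symm h)
    simp only [Function.update_self]
    constructor <;> linarith [hb.no_le_yes]
  · have hne : e ≠ p.1 := by rintro rfl; exact he rfl
    rw [Function.update_of_ne hne]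
    by_cases hc : b.id = some e
    · exact (hb.candidate e hc).2
    · exact (hb.other e hc).trans hb.no_le_yes

theorem insert_of_ne_of_lt (hb : b.Bounds f) (hv : 0 ≤ p.2)
    (h : some p.1 ≠ b.id) (hlt : b.no + p.2 < b.yes) :
    (b.insert p).Bounds (Function.update f p.1 (f p.1 + p.2)) := by
  rw [Bucket.insert_of_ne_of_lt h hlt]
  refine ⟨hlt.le, fun e he => ?_, fun e he => ?_⟩
  · have hne : e ≠ p.1 := by rintro rfl; exact h he.symm
    have := hb.candidate e he
    simp only [Function.update_of_ne hne]
    constructor <;> linarith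
  · have := hb.other e he
    rcases eq_or_ne e p.1 with rfl | hne
    · simp only [Function.update_self]; linarith
    · simp only [Function.update_of_ne hne]; linarith

theorem insert (hb : b.Bounds f) (hf : 0 ≤ f p.1) (hv : 0 ≤ p.2) :
    (b.insert p).Bounds (Function.update f p.1 (f p.1 + p.2)) := by
  by_cases h : some p.1 = b.id
  · exact hb.insert_of_eq hv h
  rcases le_or_gt b.yes (b.no + p.2) with hle | hlt
  · exact hb.insert_of_ne_of_le hf h hle
  · exact hb.insert_of_ne_of_lt hv h hlt

end Bounds

theorem bounds_run (L : List (K × ℝ)) (hv : ∀ p ∈ L, 0 ≤ p.2) :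
    (run L).Bounds (streamCount L) := by
  induction L using List.reverseRecOn with
  | nil => exact bounds_init
  | append_singleton L p ih =>
    have hvL : ∀ q ∈ L, 0 ≤ q.2 := fun q hq => hv q (by simp [hq])
    rw [run_append_singleton, streamCount_append_singleton]
    exact (ih hvL).insert (streamCount_nonneg hvL p.1) (hv p (by simp))

end Bucket

theorem bucket_candidate_bounds {K : Type} [DecidableEq K]
    (L : List (K × ℝ)) (hv : ∀ p ∈ L, 0 ≤ p.2) (e₀ : K)
    (hid : (Bucket.run L).id = some e₀) :
    (Bucket.run L).yes - (Bucket.run L).no ≤ streamCount L e₀ ∧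
      streamCount L e₀ ≤ (Bucket.run L).yes :=
  (Bucket.bounds_run L hv).candidate e₀ hid
end

section
/- Consider a bucket with fields (ID, YES, NO) maintained by the weighted majority-vote insertion rule (matching key increments YES by v; non-matching key increments NO by v, followed by a swap of YES and NO and replacement of ID if NO ≥ YES). Then at all times, for every key e₀ different from the stored ID, the true inserted total f(e₀) satisfies 0 ≤ f(e₀) ≤ NO. -/
/-! Every insertion preserves the invariant: NO ≤ YES, the weight inserted so far with the
candidate key is at most YES, and that of every other key is at most NO. The only delicate
case is the swap on inserting `(k, v)`: `k` was not the candidate, so its weight grows from at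
most NO to at most NO + v, the new YES; the old candidate's weight is at most the old YES, which
becomes the new NO. -/

theorem streamCount_cons {K : Type} [DecidableEq K] (p : K × ℝ) (L : List (K × ℝ)) (e : K) :
    streamCount (p :: L) e = (if p.1 = e then p.2 else 0) + streamCount L e := by
  simp [streamCount]

namespace Bucket

variable {K : Type} [DecidableEq K]

def bound (b : Bucket K) (e : K) : ℝ :=
  if b.id = some e then b.yes else b.no

def Dominates (b : Bucket K) (f : K → ℝ) : Prop :=
  b.no ≤ b.yes ∧ ∀ e, f e ≤ b.bound e

theorem init_dominates_zero : (init K).Dominates 0 :=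
  ⟨le_rfl, fun e => by simp [bound, init]⟩

theorem bound_le_yes {b : Bucket K} (h : b.no ≤ b.yes) (e : K) : b.bound e ≤ b.yes := by
  unfold bound
  split_ifs
  exacts [le_rfl, h]

theorem Dominates.insert {b : Bucket K} {f : K → ℝ} (h : b.Dominates f) {p : K × ℝ}
    (hp : 0 ≤ p.2) : (b.insert p).Dominates fun e => f e + if p.1 = e then p.2 else 0 := by
  obtain ⟨hno, hf⟩ := h
  have hnew (hcand : b.id ≠ some p.1) : f p.1 ≤ b.no := by simpa [bound, hcand] using hf p.1
  simp only [Bucket.insert]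
  split_ifs with hcand hswap
  · have hyes : f p.1 ≤ b.yes := by simpa [bound, ← hcand] using hf p.1
    refine ⟨by linarith, fun e => ?_⟩
    rcases eq_or_ne p.1 e with rfl | hpe
    · simpa [bound, ← hcand] using add_le_add_right hyes p.2
    · simpa [bound, ← hcand, hpe] using hf e
  · refine ⟨by linarith, fun e => ?_⟩
    rcases eq_or_ne p.1 e with rfl | hpe
    · simpa [bound] using hnew (Ne.symm hcand)
    · simpa [bound, hpe] using (hf e).trans (bound_le_yes hno e)
  · refine ⟨by linarith, fun e => ?_⟩
    rcases eq_or_ne p.1 e with rfl | hpe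
    · simpa [bound, Ne.symm hcand] using hnew (Ne.symm hcand)
    · have hmono : b.bound e ≤ (⟨b.id, b.yes, b.no + p.2⟩ : Bucket K).bound e := by
        unfold bound
        split_ifs <;> linarith
      simpa [hpe] using (hf e).trans hmono

theorem Dominates.foldl {b : Bucket K} {f : K → ℝ} (h : b.Dominates f) {L : List (K × ℝ)}
    (hv : ∀ p ∈ L, 0 ≤ p.2) :
    (L.foldl Bucket.insert b).Dominates fun e => f e + streamCount L e := by
  induction L generalizing b f with
  | nil => simpa [streamCount] using h
  | cons p L ih =>
    simp only [List.foldl_cons, streamCount_cons, ← add_assoc]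
    exact ih (h.insert (hv p List.mem_cons_self)) fun q hq => hv q (List.mem_cons_of_mem p hq)

theorem run_dominates {L : List (K × ℝ)} (hv : ∀ p ∈ L, 0 ≤ p.2) :
    (run L).Dominates (streamCount L) := by
  simpa [run] using init_dominates_zero.foldl hv

end Bucket

theorem bucket_noncandidate_bounds {K : Type} [DecidableEq K]
    (L : List (K × ℝ)) (hv : ∀ p ∈ L, 0 ≤ p.2) (e₀ : K)
    (hid : (Bucket.run L).id ≠ some e₀) :
    0 ≤ streamCount L e₀ ∧ streamCount L e₀ ≤ (Bucket.run L).no := by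
  refine ⟨streamCount_nonneg hv e₀, ?_⟩
  simpa [Bucket.bound, hid] using (Bucket.run_dominates hv).2 e₀
end

section
/- Let Λ, N > 0, R_w, R_λ with R_w·R_λ ≥ 2 and R_λ > 1, and define d as the root of R_λ^d / (R_w R_λ)^{2^d + d} = Δ₁·(Λ/N)·ln(1/Δ) for constants Δ₁ > 0 and 0 < Δ < 1. Then d = O(ln ln(N/Λ)) as N/Λ → ∞ with the other parameters fixed; more precisely, d ≤ log₂(log_{R_w R_λ}(N/(Δ₁ Λ ln(1/Δ)))) + 1 for N/Λ sufficiently large. -/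
/-!
Taking `log` to the base `R = Rw·Rλ` turns the defining equation of `d` into
`2^d + (1 - log_R Rλ)·d = L` with `L = log_R (N / (Δ₁·Λ·ln(1/Δ)))`. Since `2^d` outgrows any
linear function, `L ≥ 2^(d-1)` once `d` is large; and `d > log₂ L + 1` means `2^(d-1) > L`,
which forces `d` to be large as soon as `L` is.
-/

open Real Filter

theorem eventually_mul_le_rpow_atTop {b : ℝ} (hb : 1 < b) (a : ℝ) :
    ∀ᶠ x in atTop, a * x ≤ b ^ x := by
  filter_upwards [((isLittleO_pow_exp_pos_mul_atTop 1 (log_pos hb)).const_mul_left a).bound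
    one_pos] with x hx
  rw [rpow_def_of_pos (by linarith)]
  simpa [abs_of_pos (exp_pos _)] using (le_abs_self _).trans hx

theorem le_logb_two_add_one_of_two_rpow_add_mul_eq (a : ℝ) :
    ∃ L₀ : ℝ, ∀ d L : ℝ, L₀ ≤ L → 2 ^ d + a * d = L → d ≤ logb 2 L + 1 := by
  obtain ⟨D, hD⟩ := eventually_atTop.mp (eventually_mul_le_rpow_atTop one_lt_two (-2 * a))
  refine ⟨2 ^ (D - 1), fun d L hL hdL => ?_⟩
  by_contra! hd
  have hL_lt : L < 2 ^ (d - 1) := by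
    rwa [← logb_lt_iff_lt_rpow one_lt_two ((rpow_pos_of_pos two_pos _).trans_le hL),
      lt_sub_iff_add_lt]
  have hDd : D ≤ d := by
    have := (rpow_lt_rpow_left_iff one_lt_two).mp (hL.trans_lt hL_lt)
    linarith
  have h2d : (2 : ℝ) ^ d = 2 * 2 ^ (d - 1) := by
    rw [rpow_sub two_pos, rpow_one]; ring
  linarith [hD d hDd]

theorem two_rpow_add_mul_eq_logb_inv {R r d ε : ℝ} (hR : 1 < R) (hr : 0 < r)
    (h : r ^ d / R ^ ((2 : ℝ) ^ d + d) = ε) :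
    2 ^ d + (1 - logb R r) * d = logb R ε⁻¹ := by
  have hR0 : 0 < R := by linarith
  rw [← h, logb_inv, logb_div (rpow_pos_of_pos hr d).ne' (rpow_pos_of_pos hR0 _).ne',
    logb_rpow_eq_mul_logb_of_pos hr, logb_rpow hR0 hR.ne']
  ring

theorem num_layers_doubly_log_general (Rw Rl Δ₁ Δ : ℝ)
    (hR : 2 ≤ Rw * Rl) (hRl : 1 < Rl) :
    ∃ M : ℝ, ∀ N Λ d : ℝ, 0 < Λ → 0 < N → M ≤ N / Λ →
      Rl ^ d / (Rw * Rl) ^ ((2 : ℝ) ^ d + d) = Δ₁ * (Λ / N) * Real.log (1 / Δ) →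
      d ≤ Real.logb 2 (Real.logb (Rw * Rl) (N / (Δ₁ * Λ * Real.log (1 / Δ)))) + 1 := by
  have hR1 : 1 < Rw * Rl := by linarith
  obtain ⟨L₀, hL₀⟩ := le_logb_two_add_one_of_two_rpow_add_mul_eq (1 - logb (Rw * Rl) Rl)
  refine ⟨Δ₁ * log (1 / Δ) * (Rw * Rl) ^ L₀, fun N Λ d hΛ hN hM heq => ?_⟩
  have hε : 0 < Δ₁ * (Λ / N) * log (1 / Δ) :=
    heq ▸ div_pos (rpow_pos_of_pos (by linarith) d) (rpow_pos_of_pos (by linarith) _)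
  have hL : L₀ ≤ logb (Rw * Rl) (Δ₁ * (Λ / N) * log (1 / Δ))⁻¹ := by
    rw [le_logb_iff_rpow_le hR1 (inv_pos.mpr hε), ← one_div, le_div_iff₀ hε]
    calc (Rw * Rl) ^ L₀ * (Δ₁ * (Λ / N) * log (1 / Δ))
        = Δ₁ * log (1 / Δ) * (Rw * Rl) ^ L₀ * (Λ / N) := by ring
      _ ≤ N / Λ * (Λ / N) := by gcongr
      _ = 1 := by field_simp
  have hK : N / (Δ₁ * Λ * log (1 / Δ)) = (Δ₁ * (Λ / N) * log (1 / Δ))⁻¹ := by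
    simp only [mul_inv, inv_div]; ring
  rw [hK]
  exact hL₀ d _ hL (two_rpow_add_mul_eq_logb_inv hR1 (by linarith) heq)

/-- The number of layers `d`, defined as the root of
`Rλ^d / (Rw·Rλ)^(2^d + d) = Δ₁·(Λ/N)·ln(1/Δ)`, grows doubly
logarithmically in `N/Λ`: for `N/Λ` sufficiently large,
`d ≤ log₂ (log_{Rw·Rλ} (N / (Δ₁·Λ·ln(1/Δ)))) + 1`. -/
theorem num_layers_doubly_log (Rw Rl Δ₁ Δ : ℝ)
    (hR : 2 ≤ Rw * Rl) (hRl : 1 < Rl) (hΔ₁ : 0 < Δ₁)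
    (hΔ0 : 0 < Δ) (hΔ1 : Δ < 1) :
    ∃ M : ℝ, ∀ N Λ d : ℝ, 0 < Λ → 0 < N → M ≤ N / Λ →
      Rl ^ d / (Rw * Rl) ^ ((2 : ℝ) ^ d + d) = Δ₁ * (Λ / N) * Real.log (1 / Δ) →
      d ≤ Real.logb 2 (Real.logb (Rw * Rl) (N / (Δ₁ * Λ * Real.log (1 / Δ)))) + 1 :=
  num_layers_doubly_log_general Rw Rl Δ₁ Δ hR hRl
end
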